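/- Exponential decay of the Toda soliton profile and its neutral modes: Let c > 1 and κ = κ(c). There exists C > 0 such that |r̃_c(x)| + |p̃_c(x)| ≤ C e^{−2κ|x|} for all x ∈ ℝ. Consequently, for every γ ∈ ℝ and every a ∈ (0, 2κ), the sequence n ↦ ũ_c(n − cγ) belongs to ℓ²_a ∩ ℓ²_{−a}; moreover the sequences n ↦ u̇_c(γ)(n) and n ↦ ∂_c u_c(γ)(n) belong to ℓ²_a ∩ ℓ²_{−a}, and J⁻¹u̇_c(γ) and J⁻¹∂_c u_c(γ) belong to ℓ²_{−a}. -/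

import Mathlib

/-!
Write `k = κ(c)`. Everything is built from `sech (k x) ≤ 2 e^{-k|x|}`:
`p̃_c(x) = c k (tanh (k x) - tanh (k (x - 1))) = c k sinh k · sech (k x) · sech (k (x - 1))`,
and `cosh (a + b) cosh (a - b) = cosh² a + sinh² b` turns `r̃_c` into
`-log (1 + sinh² k · sech² (k x))`, so both decay like `e^{-2k|x|}`. Differentiating in `x`, or
in `c` (`κ` is differentiable by the inverse function theorem for `k ↦ sinh k / k`), produces the
same building blocks multiplied at worst by affine functions of `x`, so the neutral modes decay at
every rate `b < 2k`. Sampling such a profile at `n - cγ` gives a sequence in `ℓ²_a ∩ ℓ²_{-a}`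
for `a < b`, and the tails `Σ_{j ≥ 0} w (n - j)` of a sequence decaying at rate `b` are
`O(e^{b min(n, 0)})`, hence in `ℓ²_{-a}`.
-/

open Real Filter Set MeasureTheory

namespace TodaPaper

noncomputable section

/-- The squared Euclidean norm on `ℝ × ℝ`. -/
def nsq (w : ℝ × ℝ) : ℝ := w.1 ^ 2 + w.2 ^ 2

/-- Membership in `ℓ²(ℤ; ℝ²)`. -/
def Meml2 (u : ℤ → ℝ × ℝ) : Prop := Summable fun n : ℤ => nsq (u n)

/-- The `ℓ²(ℤ; ℝ²)` norm. -/
def l2norm (u : ℤ → ℝ × ℝ) : ℝ := Real.sqrt (∑' n : ℤ, nsq (u n))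

/-- Membership in the exponentially weighted space `ℓ²_a`. -/
def Meml2w (a : ℝ) (u : ℤ → ℝ × ℝ) : Prop :=
  Summable fun n : ℤ => Real.exp (2 * a * n) * nsq (u n)

/-- The `ℓ²_a` norm. -/
def wnorm (a : ℝ) (u : ℤ → ℝ × ℝ) : ℝ :=
  Real.sqrt (∑' n : ℤ, Real.exp (2 * a * n) * nsq (u n))

/-- The Toda potential `V(r) = e^{-r} - 1 + r`. -/
def V (r : ℝ) : ℝ := Real.exp (-r) - 1 + r

/-- Derivative of the Toda potential, `V'(r) = 1 - e^{-r}`. -/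
def V' (r : ℝ) : ℝ := 1 - Real.exp (-r)

/-- `u = (r, p)` is a solution of the Toda lattice. -/
structure IsTodaSolution (u : ℝ → ℤ → ℝ × ℝ) : Prop where
  mem : ∀ t, Meml2 (u t)
  dr : ∀ t n, HasDerivAt (fun s => (u s n).1) ((u t (n + 1)).2 - (u t n).2) t
  dp : ∀ t n, HasDerivAt (fun s => (u s n).2) (V' (u t n).1 - V' (u t (n - 1)).1) t

/-- The decay rate `κ(c)`, the (unique, for `c > 1`) positive root of `sinh κ = c κ`. -/
def kappa (c : ℝ) : ℝ := Classical.epsilon fun k : ℝ => 0 < k ∧ Real.sinh k = c * k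

/-- The soliton displacement profile `q̃_c`. -/
def qt (c x : ℝ) : ℝ := Real.log (Real.cosh (kappa c * (x - 1)) / Real.cosh (kappa c * x))

/-- The soliton momentum profile `p̃_c = -c q̃_c'`. -/
def ptil (c : ℝ) : ℝ → ℝ := fun x => -c * deriv (qt c) x

/-- The soliton relative-displacement profile `r̃_c(x) = q̃_c(x+1) - q̃_c(x)`. -/
def rtil (c : ℝ) : ℝ → ℝ := fun x => qt c (x + 1) - qt c x

/-- The soliton profile `ũ_c = (r̃_c, p̃_c)`. -/
def solProfile (c : ℝ) (x : ℝ) : ℝ × ℝ := (rtil c x, ptil c x)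

/-- The soliton `u_c(γ)(n) = ũ_c(n - cγ)`. -/
def uc (c γ : ℝ) : ℤ → ℝ × ℝ := fun n => solProfile c ((n : ℝ) - c * γ)

/-- The neutral mode `u̇_c(γ)(n) = -c ũ_c'(n - cγ)`. -/
def ucDot (c γ : ℝ) : ℤ → ℝ × ℝ := fun n => (-c) • deriv (solProfile c) ((n : ℝ) - c * γ)

/-- The neutral mode `∂_c u_c(γ)(n)`. -/
def ucDc (c γ : ℝ) : ℤ → ℝ × ℝ := fun n => deriv (fun c' => solProfile c' ((n : ℝ) - c' * γ)) c

/-- The `ℓ²` pairing `⟨u, v⟩ = Σ_n (u₁ v₁ + u₂ v₂)`. -/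
def pairing (u v : ℤ → ℝ × ℝ) : ℝ := ∑' n : ℤ, ((u n).1 * (v n).1 + (u n).2 * (v n).2)

/-- The operator `J⁻¹ : (r,p) ↦ (Σ_{k=0}^∞ p(·-k), Σ_{k=1}^∞ r(·-k))`. -/
def Jinv (u : ℤ → ℝ × ℝ) : ℤ → ℝ × ℝ := fun n =>
  (∑' k : ℕ, (u (n - (k : ℤ))).2, ∑' k : ℕ, (u (n - 1 - (k : ℤ))).1)


lemma sinh_lt_mul_cosh {x : ℝ} (hx : 0 < x) : sinh x < x * cosh x := by
  obtain ⟨ξ, hξ, hslope⟩ := exists_hasDerivAt_eq_slope sinh cosh hx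
    continuous_sinh.continuousOn fun y _ => hasDerivAt_sinh y
  rw [sinh_zero, sub_zero, sub_zero, eq_div_iff hx.ne'] at hslope
  have hcosh : cosh ξ < cosh x := by
    rw [cosh_lt_cosh, abs_of_pos hξ.1, abs_of_pos hx]; exact hξ.2
  rw [← hslope, mul_comm]
  exact mul_lt_mul_of_pos_left hcosh hx

lemma hasDerivAt_sinh_div_self {k : ℝ} (hk : k ≠ 0) :
    HasDerivAt (fun k => sinh k / k) ((k * cosh k - sinh k) / k ^ 2) k :=
  ((hasDerivAt_sinh k).div (hasDerivAt_id' k) hk).congr_deriv (by ring)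

lemma strictMonoOn_sinh_div_self : StrictMonoOn (fun k => sinh k / k) (Ioi 0) := by
  refine strictMonoOn_of_deriv_pos (convex_Ioi 0)
    (continuous_sinh.continuousOn.div continuousOn_id fun y hy => ne_of_gt hy) fun k hk => ?_
  rw [interior_Ioi] at hk
  rw [(hasDerivAt_sinh_div_self (ne_of_gt hk)).deriv]
  exact div_pos (by linarith [sinh_lt_mul_cosh hk]) (pow_pos hk 2)

lemma exists_pos_sinh_eq_mul_self {c : ℝ} (hc : 1 < c) : ∃ k, 0 < k ∧ sinh k = c * k := by
  -- the root lies between `arcosh c`, where `sinh k < k cosh k = c k`, and `4 c`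
  have h₀ : sinh (arcosh c) - c * arcosh c < 0 := by
    have := sinh_lt_mul_cosh (arcosh_pos hc)
    rw [cosh_arcosh hc.le] at this
    linarith
  have h₁ : 0 ≤ sinh (4 * c) - c * (4 * c) := by
    have := quadratic_le_exp_of_nonneg (by linarith : (0 : ℝ) ≤ 4 * c)
    have := exp_le_one_iff.mpr (by linarith : -(4 * c) ≤ 0)
    rw [sinh_eq]
    nlinarith
  obtain ⟨k, hk, hroot⟩ := intermediate_value_uIcc (f := fun k => sinh k - c * k)
    (by fun_prop) (mem_uIcc_of_le h₀.le h₁)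
  refine ⟨k, lt_of_lt_of_le (lt_min (arcosh_pos hc) (by linarith)) hk.1, ?_⟩
  simp only at hroot
  linarith

lemma kappa_spec {c : ℝ} (hc : 1 < c) : 0 < kappa c ∧ sinh (kappa c) = c * kappa c :=
  Classical.epsilon_spec (exists_pos_sinh_eq_mul_self hc)

lemma kappa_pos {c : ℝ} (hc : 1 < c) : 0 < kappa c := (kappa_spec hc).1

lemma sinh_kappa_div {c : ℝ} (hc : 1 < c) : sinh (kappa c) / kappa c = c := by
  rw [(kappa_spec hc).2, mul_div_cancel_right₀ _ (kappa_pos hc).ne']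

lemma kappa_sinh_div {k : ℝ} (hk : 0 < k) : kappa (sinh k / k) = k := by
  have hc : 1 < sinh k / k := (one_lt_div hk).mpr (self_lt_sinh_iff.mpr hk)
  exact strictMonoOn_sinh_div_self.injOn (kappa_pos hc) hk (sinh_kappa_div hc)

lemma continuousAt_kappa {c : ℝ} (hc : 1 < c) : ContinuousAt kappa c := by
  have hmono : MonotoneOn kappa (Ioi 1) := fun c₁ h₁ c₂ h₂ h => by
    rw [← strictMonoOn_sinh_div_self.le_iff_le (kappa_pos h₁) (kappa_pos h₂),
      sinh_kappa_div h₁, sinh_kappa_div h₂]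
    exact h
  refine continuousAt_of_monotoneOn_of_image_mem_nhds hmono (Ioi_mem_nhds hc) ?_
  refine mem_of_superset (Ioi_mem_nhds (kappa_pos hc)) fun k (hk : 0 < k) => ?_
  exact ⟨sinh k / k, (one_lt_div hk).mpr (self_lt_sinh_iff.mpr hk), kappa_sinh_div hk⟩

lemma differentiableAt_kappa {c : ℝ} (hc : 1 < c) : DifferentiableAt ℝ kappa c := by
  have hk := kappa_pos hc
  refine (HasDerivAt.of_local_left_inverse (continuousAt_kappa hc)
    (hasDerivAt_sinh_div_self hk.ne') ?_ ?_).differentiableAt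
  · exact div_ne_zero (by linarith [sinh_lt_mul_cosh hk]) (pow_ne_zero 2 hk.ne')
  · filter_upwards [Ioi_mem_nhds hc] with c' hc' using sinh_kappa_div hc'

open Asymptotics

abbrev ExpDecay {E : Type*} [Norm E] (b : ℝ) (f : ℝ → E) : Prop :=
  f =O[⊤] fun x => exp (-(b * |x|))

namespace ExpDecay

section

variable {E : Type*} [Norm E] {f : ℝ → E} {b : ℝ}

lemma of_le {C : ℝ} (h : ∀ x, ‖f x‖ ≤ C * exp (-(b * |x|))) : ExpDecay b f :=
  isBigO_top.mpr ⟨C, fun x => by rw [Real.norm_of_nonneg (exp_pos _).le]; exact h x⟩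

lemma exists_pos_bound (hf : ExpDecay b f) : ∃ C > 0, ∀ x, ‖f x‖ ≤ C * exp (-(b * |x|)) := by
  obtain ⟨C, hC, h⟩ := hf.exists_pos
  exact ⟨C, hC, fun x => by simpa [Real.norm_of_nonneg (exp_pos _).le] using isBigOWith_top.mp h x⟩

lemma mono (hf : ExpDecay b f) {b' : ℝ} (h : b' ≤ b) : ExpDecay b' f :=
  hf.trans <| of_le (C := 1) fun x => by
    rw [Real.norm_of_nonneg (exp_pos _).le, one_mul]
    gcongr

lemma comp_add (hf : ExpDecay b f) (hb : 0 ≤ b) (s : ℝ) : ExpDecay b fun x => f (x + s) :=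
  (hf.comp_tendsto tendsto_top).trans <| of_le (C := exp (b * |s|)) fun x => by
    rw [Function.comp_apply, Real.norm_of_nonneg (exp_pos _).le, ← exp_add]
    gcongr
    have h := abs_sub_abs_le_abs_sub x (-s)
    rw [abs_neg, sub_neg_eq_add] at h
    nlinarith

lemma comp_sub (hf : ExpDecay b f) (hb : 0 ≤ b) (s : ℝ) : ExpDecay b fun x => f (x - s) := by
  simpa only [sub_eq_add_neg] using hf.comp_add hb (-s)

end

lemma mul {f g : ℝ → ℝ} {b b' : ℝ} (hf : ExpDecay b f) (hg : ExpDecay b' g) :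
    ExpDecay (b + b') fun x => f x * g x :=
  (IsBigO.mul hf hg).congr_right fun x => by rw [← exp_add]; ring_nf

end ExpDecay

lemma expDecay_id {δ : ℝ} (hδ : 0 < δ) : ExpDecay (-δ) fun x : ℝ => x :=
  .of_le (C := δ⁻¹) fun x => by
    rw [Real.norm_eq_abs, le_inv_mul_iff₀ hδ]
    linarith [add_one_le_exp (-(-δ * |x|))]

lemma ExpDecay.id_mul {f : ℝ → ℝ} {b b' : ℝ} (hf : ExpDecay b f) (h : b' < b) :
    ExpDecay b' fun x => x * f x := by
  simpa using (expDecay_id (sub_pos.mpr h)).mul hf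

lemma summable_exp_neg_mul_abs {b : ℝ} (hb : 0 < b) :
    Summable fun n : ℤ => exp (-(b * |(n : ℝ)|)) := by
  have h : Summable fun k : ℕ => exp (k * -b) := summable_exp_nat_mul_iff.mpr (by linarith)
  refine .of_nat_of_neg (h.congr fun k => ?_) (h.congr fun k => ?_) <;> simp [mul_comm]

lemma nsq_le_two_mul_norm_sq (w : ℝ × ℝ) : nsq w ≤ 2 * ‖w‖ ^ 2 := by
  have h₁ : w.1 ^ 2 ≤ ‖w‖ ^ 2 := by
    rw [← sq_abs, ← Real.norm_eq_abs]; gcongr; exact norm_fst_le w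
  have h₂ : w.2 ^ 2 ≤ ‖w‖ ^ 2 := by
    rw [← sq_abs, ← Real.norm_eq_abs]; gcongr; exact norm_snd_le w
  rw [nsq]; linarith

lemma meml2w_of_exp_mul_norm_le {u : ℤ → ℝ × ℝ} {a ε C : ℝ} (hε : 0 < ε)
    (hu : ∀ n : ℤ, exp (a * n) * ‖u n‖ ≤ C * exp (-(ε * |(n : ℝ)|))) : Meml2w a u := by
  refine .of_nonneg_of_le (fun n => mul_nonneg (exp_pos _).le (by rw [nsq]; positivity))
    (fun n => ?_) ((summable_exp_neg_mul_abs (by positivity : 0 < 2 * ε)).mul_left (2 * C ^ 2))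
  have hexp : exp (2 * a * n) = exp (a * n) ^ 2 := by rw [sq, ← exp_add]; ring_nf
  calc exp (2 * a * n) * nsq (u n) ≤ exp (a * n) ^ 2 * (2 * ‖u n‖ ^ 2) := by
        rw [hexp]; gcongr; exact nsq_le_two_mul_norm_sq _
    _ = 2 * (exp (a * n) * ‖u n‖) ^ 2 := by ring
    _ ≤ 2 * (C * exp (-(ε * |(n : ℝ)|))) ^ 2 := by
        gcongr 2 * ?_
        exact pow_le_pow_left₀ (by positivity) (hu n) 2
    _ = 2 * C ^ 2 * exp (-(2 * ε * |(n : ℝ)|)) := by rw [mul_pow, sq (exp _), ← exp_add]; ring_nf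

lemma meml2w_of_expDecay {P : ℝ → ℝ × ℝ} {a b : ℝ} (hP : ExpDecay b P) (ha : |a| < b) :
    Meml2w a fun n : ℤ => P n := by
  obtain ⟨C, hC, hbound⟩ := hP.exists_pos_bound
  refine meml2w_of_exp_mul_norm_le (sub_pos.mpr ha) (C := C) fun n => ?_
  have han : a * n ≤ |a| * |(n : ℝ)| := (le_abs_self _).trans (abs_mul _ _).le
  calc exp (a * n) * ‖P n‖ ≤ exp (a * n) * (C * exp (-(b * |(n : ℝ)|))) := by
        gcongr; exact hbound n
    _ = C * exp (a * n - b * |(n : ℝ)|) := by rw [sub_eq_add_neg, exp_add]; ring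
    _ ≤ C * exp (-((b - |a|) * |(n : ℝ)|)) := by gcongr; linarith

lemma abs_tsum_comp_sub_le {w : ℤ → ℝ} {C b : ℝ} (hb : 0 < b) (hC : 0 ≤ C)
    (hw : ∀ m : ℤ, |w m| ≤ C * exp (-(b * |(m : ℝ)|))) (n : ℤ) :
    |∑' k : ℕ, w (n - k)| ≤
      C * (∑' m : ℤ, exp (-(b * |(m : ℝ)|))) * exp (b * min (n : ℝ) 0) := by
  set N := max n 0
  -- for `k ≥ 0`, `|n - k| = -min n 0 + |max n 0 - k|`
  have hsplit : ∀ k : ℕ, exp (-(b * |((n - k : ℤ) : ℝ)|)) =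
      exp (b * min (n : ℝ) 0) * exp (-(b * |((N - k : ℤ) : ℝ)|)) := by
    intro k
    rw [← exp_add]
    congr 1
    rcases le_total n 0 with h | h
    · have h' : (n : ℝ) ≤ 0 := by exact_mod_cast h
      simp only [N, max_eq_right h, min_eq_left h']
      push_cast
      rw [abs_of_nonpos (by linarith [k.cast_nonneg (α := ℝ)]),
        abs_of_nonpos (by linarith [k.cast_nonneg (α := ℝ)])]
      ring
    · have h' : (0 : ℝ) ≤ n := by exact_mod_cast h
      simp only [N, max_eq_left h, min_eq_right h']
      ring
  have hsum := summable_exp_neg_mul_abs hb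
  have hinj : Function.Injective fun k : ℕ => N - k := fun k l h => by simpa using h
  have hg : Summable fun k : ℕ => exp (-(b * |((N - k : ℤ) : ℝ)|)) := hsum.comp_injective hinj
  calc |∑' k : ℕ, w (n - k)|
      ≤ ∑' k : ℕ, C * exp (b * min (n : ℝ) 0) * exp (-(b * |((N - k : ℤ) : ℝ)|)) :=
        tsum_of_norm_bounded (hg.mul_left _).hasSum fun k => by
          rw [Real.norm_eq_abs, mul_assoc, ← hsplit]; exact hw _
    _ = C * exp (b * min (n : ℝ) 0) * ∑' k : ℕ, exp (-(b * |((N - k : ℤ) : ℝ)|)) := tsum_mul_left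
    _ ≤ C * exp (b * min (n : ℝ) 0) * ∑' m : ℤ, exp (-(b * |(m : ℝ)|)) := by
        gcongr
        exact hg.tsum_le_tsum_of_inj _ hinj (fun _ _ => (exp_pos _).le) (fun _ => le_rfl) hsum
    _ = _ := by ring

lemma meml2w_neg_jinv_of_expDecay {P : ℝ → ℝ × ℝ} {a b : ℝ} (hP : ExpDecay b P)
    (ha : 0 < a) (hab : a < b) : Meml2w (-a) (Jinv fun n : ℤ => P n) := by
  obtain ⟨C, hC, hbound⟩ := hP.exists_pos_bound
  have hb : 0 < b := ha.trans hab
  set S := ∑' m : ℤ, exp (-(b * |(m : ℝ)|))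
  have hS : 0 ≤ S := tsum_nonneg fun _ => (exp_pos _).le
  have hJ : ∀ n : ℤ, ‖Jinv (fun n : ℤ => P n) n‖ ≤ C * S * exp (b * min (n : ℝ) 0) := by
    intro n
    refine norm_prod_le_iff.mpr ⟨?_, ?_⟩
    · rw [Real.norm_eq_abs]
      exact abs_tsum_comp_sub_le hb hC.le (fun m => (norm_snd_le _).trans (hbound m)) n
    · rw [Real.norm_eq_abs]
      refine (abs_tsum_comp_sub_le hb hC.le (fun m => (norm_fst_le _).trans (hbound m))
        (n - 1)).trans ?_
      gcongr
      linarith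
  refine meml2w_of_exp_mul_norm_le (lt_min ha (sub_pos.mpr hab)) (C := C * S) fun n => ?_
  calc exp (-a * n) * ‖Jinv (fun n : ℤ => P n) n‖
      ≤ exp (-a * n) * (C * S * exp (b * min (n : ℝ) 0)) := by gcongr; exact hJ n
    _ = C * S * exp (-a * n + b * min (n : ℝ) 0) := by rw [exp_add]; ring
    _ ≤ C * S * exp (-(min a (b - a) * |(n : ℝ)|)) := by
        gcongr
        have h₁ := min_le_left a (b - a)
        have h₂ := min_le_right a (b - a)
        rcases le_total (n : ℝ) 0 with h | h
        · rw [min_eq_left h, abs_of_nonpos h]; nlinarith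
        · rw [min_eq_right h, abs_of_nonneg h]; nlinarith

lemma meml2w_of_expDecay_comp_sub {P : ℝ → ℝ × ℝ} {a b : ℝ} (hP : ExpDecay b P) (t : ℝ)
    (ha : 0 < a) (hab : a < b) :
    Meml2w a (fun n : ℤ => P (n - t)) ∧ Meml2w (-a) (fun n : ℤ => P (n - t)) ∧
      Meml2w (-a) (Jinv fun n : ℤ => P (n - t)) := by
  have hPt := hP.comp_sub (ha.trans hab).le t
  refine ⟨meml2w_of_expDecay (P := fun x => P (x - t)) hPt ?_,
    meml2w_of_expDecay (P := fun x => P (x - t)) hPt ?_,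
    meml2w_neg_jinv_of_expDecay (P := fun x => P (x - t)) hPt ha hab⟩
  · rwa [abs_of_pos ha]
  · rwa [abs_neg, abs_of_pos ha]

def logCoshDiff (k x : ℝ) : ℝ := log (cosh (k * x)) - log (cosh (k * (x - 1)))

def tanhDiff (k x : ℝ) : ℝ := tanh (k * x) - tanh (k * (x - 1))

def sechSq (k x : ℝ) : ℝ := (cosh (k * x) ^ 2)⁻¹

lemma hasDerivAt_log_cosh (y : ℝ) : HasDerivAt (fun z => log (cosh z)) (tanh y) y :=
  ((hasDerivAt_cosh y).log (cosh_pos y).ne').congr_deriv (tanh_eq_sinh_div_cosh y).symm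

lemma hasDerivAt_tanh (y : ℝ) : HasDerivAt tanh (cosh y ^ 2)⁻¹ y := by
  have h := (hasDerivAt_sinh y).div (hasDerivAt_cosh y) (cosh_pos y).ne'
  rw [show sinh / cosh = tanh from funext fun z => (tanh_eq_sinh_div_cosh z).symm] at h
  refine h.congr_deriv ?_
  rw [← sq, ← sq, cosh_sq, add_sub_cancel_left, inv_eq_one_div]

section

variable {K Y : ℝ → ℝ} {K' Y' t : ℝ}

lemma hasDerivAt_logCoshDiff_comp (hK : HasDerivAt K K' t) (hY : HasDerivAt Y Y' t) :
    HasDerivAt (fun s => logCoshDiff (K s) (Y s))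
      (tanh (K t * Y t) * (K' * Y t + K t * Y')
        - tanh (K t * (Y t - 1)) * (K' * (Y t - 1) + K t * Y')) t :=
  ((hasDerivAt_log_cosh _).comp t (hK.mul hY)).sub
    ((hasDerivAt_log_cosh _).comp t (hK.mul (hY.sub_const 1)))

lemma hasDerivAt_tanhDiff_comp (hK : HasDerivAt K K' t) (hY : HasDerivAt Y Y' t) :
    HasDerivAt (fun s => tanhDiff (K s) (Y s))
      (sechSq (K t) (Y t) * (K' * Y t + K t * Y')
        - sechSq (K t) (Y t - 1) * (K' * (Y t - 1) + K t * Y')) t :=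
  ((hasDerivAt_tanh _).comp t (hK.mul hY)).sub
    ((hasDerivAt_tanh _).comp t (hK.mul (hY.sub_const 1)))

end

lemma qt_eq (c : ℝ) : qt c = fun x => -logCoshDiff (kappa c) x := funext fun x => by
  rw [qt, log_div (cosh_pos _).ne' (cosh_pos _).ne', logCoshDiff, neg_sub]

lemma rtil_eq (c x : ℝ) :
    rtil c x = logCoshDiff (kappa c) x - logCoshDiff (kappa c) (x + 1) := by
  rw [rtil, qt_eq]; ring

lemma ptil_eq (c x : ℝ) : ptil c x = c * kappa c * tanhDiff (kappa c) x := by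
  have h : HasDerivAt (fun x => -logCoshDiff (kappa c) x) _ x :=
    (hasDerivAt_logCoshDiff_comp (hasDerivAt_const x (kappa c)) (hasDerivAt_id' x)).neg
  rw [ptil, qt_eq, h.deriv, tanhDiff]
  ring

lemma hasDerivAt_solProfile (c x : ℝ) :
    HasDerivAt (solProfile c)
      (kappa c * (tanhDiff (kappa c) x - tanhDiff (kappa c) (x + 1)),
        c * kappa c * (kappa c * (sechSq (kappa c) x - sechSq (kappa c) (x - 1)))) x := by
  have hK := hasDerivAt_const x (kappa c)
  have hr := (hasDerivAt_logCoshDiff_comp hK (hasDerivAt_id' x)).sub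
    (hasDerivAt_logCoshDiff_comp hK ((hasDerivAt_id' x).add_const 1))
  have hp := (hasDerivAt_tanhDiff_comp hK (hasDerivAt_id' x)).const_mul (c * kappa c)
  rw [show solProfile c = fun x => (logCoshDiff (kappa c) x - logCoshDiff (kappa c) (x + 1),
    c * kappa c * tanhDiff (kappa c) x) from funext fun x => by rw [solProfile, rtil_eq, ptil_eq]]
  refine (hr.prodMk hp).congr_deriv ?_
  simp only [tanhDiff, add_sub_cancel_right]
  ext <;> ring

/-- The profile of the neutral mode `∂_c u_c(γ)`, with `k = κ(c)` and `k' = κ'(c)`. -/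
def dcProfile (k k' c γ x : ℝ) : ℝ × ℝ :=
  (k' * ((x - 1) * tanhDiff k x - (x + 1) * tanhDiff k (x + 1))
      + k * γ * (tanhDiff k (x + 1) - tanhDiff k x),
    (k + c * k') * tanhDiff k x
      + c * k * (k' * (x * sechSq k x - (x - 1) * sechSq k (x - 1))
        + k * γ * (sechSq k (x - 1) - sechSq k x)))

lemma hasDerivAt_solProfile_comp_sub_mul {c : ℝ} (hc : 1 < c) (γ y : ℝ) :
    HasDerivAt (fun c' => solProfile c' (y - c' * γ))
      (dcProfile (kappa c) (deriv kappa c) c γ (y - c * γ)) c := by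
  have hK := (differentiableAt_kappa hc).hasDerivAt
  have hY : HasDerivAt (fun c' => y - c' * γ) (-γ) c := by
    simpa using ((hasDerivAt_id c).mul_const γ).const_sub y
  have hr := (hasDerivAt_logCoshDiff_comp hK hY).sub
    (hasDerivAt_logCoshDiff_comp hK (hY.add_const 1))
  have hp := ((hasDerivAt_id' c).mul hK).mul (hasDerivAt_tanhDiff_comp hK hY)
  rw [show (fun c' => solProfile c' (y - c' * γ)) = fun c' =>
      (logCoshDiff (kappa c') (y - c' * γ) - logCoshDiff (kappa c') (y - c' * γ + 1),
        c' * kappa c' * tanhDiff (kappa c') (y - c' * γ))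
    from funext fun c' => by rw [solProfile, rtil_eq, ptil_eq]]
  refine (hr.prodMk hp).congr_deriv ?_
  simp only [dcProfile, tanhDiff, add_sub_cancel_right, Pi.mul_apply]
  ext <;> ring

lemma ucDc_eq {c : ℝ} (hc : 1 < c) (γ : ℝ) :
    ucDc c γ = fun n : ℤ => dcProfile (kappa c) (deriv kappa c) c γ (n - c * γ) :=
  funext fun n => (hasDerivAt_solProfile_comp_sub_mul hc γ n).deriv

lemma inv_cosh_le (y : ℝ) : (cosh y)⁻¹ ≤ 2 * exp (-|y|) := by
  have h : exp |y| ≤ 2 * cosh y := by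
    rw [← cosh_abs, cosh_eq]; linarith [exp_pos (-|y|)]
  rw [exp_neg, ← div_eq_mul_inv, inv_le_comm₀ (cosh_pos y) (by positivity), inv_div]
  linarith

lemma expDecay_inv_cosh_mul {k : ℝ} (hk : 0 ≤ k) : ExpDecay k fun x => (cosh (k * x))⁻¹ :=
  .of_le (C := 2) fun x => by
    rw [Real.norm_of_nonneg (inv_nonneg.mpr (cosh_pos _).le), ← abs_of_nonneg hk, ← abs_mul,
      abs_of_nonneg hk]
    exact inv_cosh_le _

lemma tanhDiff_eq (k x : ℝ) :
    tanhDiff k x = sinh k * ((cosh (k * x))⁻¹ * (cosh (k * (x - 1)))⁻¹) := by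
  have h₁ := (cosh_pos (k * x)).ne'
  have h₂ := (cosh_pos (k * (x - 1))).ne'
  rw [tanhDiff, tanh_eq_sinh_div_cosh, tanh_eq_sinh_div_cosh,
    show k = k * x - k * (x - 1) by ring, sinh_sub]
  field_simp
  ring_nf

lemma expDecay_tanhDiff {k : ℝ} (hk : 0 ≤ k) : ExpDecay (2 * k) (tanhDiff k) := by
  have h := expDecay_inv_cosh_mul hk
  rw [funext (tanhDiff_eq k), two_mul]
  exact ((h.mul (h.comp_sub hk 1)).const_mul_left (sinh k))

lemma expDecay_sechSq {k : ℝ} (hk : 0 ≤ k) : ExpDecay (2 * k) (sechSq k) := by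
  have h := expDecay_inv_cosh_mul hk
  rw [show sechSq k = fun x => (cosh (k * x))⁻¹ * (cosh (k * x))⁻¹ from
    funext fun x => by rw [sechSq, sq, mul_inv], two_mul]
  exact h.mul h

lemma cosh_add_mul_cosh_sub (a b : ℝ) : cosh (a + b) * cosh (a - b) = cosh a ^ 2 + sinh b ^ 2 := by
  rw [cosh_add, cosh_sub]
  linear_combination cosh a ^ 2 * cosh_sq b + sinh b ^ 2 * cosh_sq a

lemma abs_rtil_le (c x : ℝ) : |rtil c x| ≤ sinh (kappa c) ^ 2 * sechSq (kappa c) x := by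
  set k := kappa c
  have hA : 0 < cosh (k * x) ^ 2 := by positivity
  have hAs : 0 < cosh (k * x) ^ 2 + sinh k ^ 2 := by positivity
  have hr : rtil c x = log (cosh (k * x) ^ 2) - log (cosh (k * x) ^ 2 + sinh k ^ 2) := by
    rw [rtil_eq, logCoshDiff, logCoshDiff, add_sub_cancel_right, mul_add_one, mul_sub_one,
      ← cosh_add_mul_cosh_sub, log_mul (cosh_pos _).ne' (cosh_pos _).ne', log_pow]
    push_cast
    ring
  have hle := log_le_log hA (le_add_of_nonneg_right (sq_nonneg (sinh k)))
  rw [hr, abs_sub_comm, abs_of_nonneg (sub_nonneg.mpr hle), ← log_div hAs.ne' hA.ne']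
  calc log ((cosh (k * x) ^ 2 + sinh k ^ 2) / cosh (k * x) ^ 2)
      ≤ (cosh (k * x) ^ 2 + sinh k ^ 2) / cosh (k * x) ^ 2 - 1 :=
        log_le_sub_one_of_pos (by positivity)
    _ = sinh k ^ 2 * sechSq k x := by rw [sechSq]; field_simp; ring

lemma expDecay_rtil {c : ℝ} (hc : 1 < c) : ExpDecay (2 * kappa c) (rtil c) := by
  refine (isBigO_of_le ⊤ fun x => ?_).trans
    ((expDecay_sechSq (kappa_pos hc).le).const_mul_left (sinh (kappa c) ^ 2))
  rw [Real.norm_eq_abs, Real.norm_of_nonneg (by rw [sechSq]; positivity)]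
  exact abs_rtil_le c x

lemma expDecay_ptil {c : ℝ} (hc : 1 < c) : ExpDecay (2 * kappa c) (ptil c) := by
  rw [funext (ptil_eq c)]
  exact (expDecay_tanhDiff (kappa_pos hc).le).const_mul_left (c * kappa c)

lemma expDecay_solProfile {c : ℝ} (hc : 1 < c) : ExpDecay (2 * kappa c) (solProfile c) :=
  (expDecay_rtil hc).prod_left (expDecay_ptil hc)

lemma exists_abs_rtil_add_abs_ptil_le {c : ℝ} (hc : 1 < c) :
    ∃ C > (0 : ℝ), ∀ x, |rtil c x| + |ptil c x| ≤ C * exp (-(2 * kappa c * |x|)) := by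
  obtain ⟨C, hC, h⟩ := (expDecay_solProfile hc).exists_pos_bound
  refine ⟨2 * C, by positivity, fun x => ?_⟩
  have h₁ := (norm_fst_le (solProfile c x)).trans (h x)
  have h₂ := (norm_snd_le (solProfile c x)).trans (h x)
  simp only [solProfile, Real.norm_eq_abs] at h₁ h₂
  linarith

lemma expDecay_deriv_solProfile {c : ℝ} (hc : 1 < c) :
    ExpDecay (2 * kappa c) (deriv (solProfile c)) := by
  have hk : 0 ≤ 2 * kappa c := by linarith [kappa_pos hc]
  have hT := expDecay_tanhDiff (kappa_pos hc).le
  have hS := expDecay_sechSq (kappa_pos hc).le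
  rw [funext fun x => (hasDerivAt_solProfile c x).deriv]
  exact (((hT.sub (hT.comp_add hk 1)).const_mul_left (kappa c)).prod_left
    (((hS.sub (hS.comp_sub hk 1)).const_mul_left (kappa c)).const_mul_left (c * kappa c)))

lemma expDecay_dcProfile {k b : ℝ} (hk : 0 ≤ k) (hb : b < 2 * k) (k' c γ : ℝ) :
    ExpDecay b (dcProfile k k' c γ) := by
  have h2k : 0 ≤ 2 * k := by linarith
  have hT := expDecay_tanhDiff hk
  have hT₁ := hT.comp_add h2k 1
  have hS := expDecay_sechSq hk
  have hS₁ := hS.comp_sub h2k 1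
  have hT' := hT.mono hb.le
  have hT₁' := hT₁.mono hb.le
  have hS' := hS.mono hb.le
  have hS₁' := hS₁.mono hb.le
  refine IsBigO.prod_left ?_ ?_
  · refine ((((hT.id_mul hb).sub hT').sub ((hT₁.id_mul hb).add hT₁')).const_mul_left k'
      |>.add ((hT₁'.sub hT').const_mul_left (k * γ))).congr_left fun x => by ring
  · refine ((hT'.const_mul_left (k + c * k')).add
      ((((hS.id_mul hb).sub ((hS₁.id_mul hb).sub hS₁')).const_mul_left k').add
        ((hS₁'.sub hS').const_mul_left (k * γ)) |>.const_mul_left (c * k))).congr_left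
      fun x => by ring

/-- Exponential decay of the Toda soliton profile and its neutral modes. -/
theorem soliton_exponential_decay (c : ℝ) (hc : 1 < c) :
    (∃ C > (0:ℝ), ∀ x : ℝ,
      |rtil c x| + |ptil c x| ≤ C * Real.exp (-(2 * kappa c * |x|))) ∧
    ∀ γ a : ℝ, 0 < a → a < 2 * kappa c →
      Meml2w a (uc c γ) ∧ Meml2w (-a) (uc c γ) ∧
      Meml2w a (ucDot c γ) ∧ Meml2w (-a) (ucDot c γ) ∧
      Meml2w a (ucDc c γ) ∧ Meml2w (-a) (ucDc c γ) ∧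
      Meml2w (-a) (Jinv (ucDot c γ)) ∧ Meml2w (-a) (Jinv (ucDc c γ)) := by
  refine ⟨exists_abs_rtil_add_abs_ptil_le hc, fun γ a ha hak => ?_⟩
  obtain ⟨b, hab, hbk⟩ := exists_between hak
  obtain ⟨hu, hu', -⟩ :=
    meml2w_of_expDecay_comp_sub ((expDecay_solProfile hc).mono hbk.le) (c * γ) ha hab
  obtain ⟨hdot, hdot', hJdot⟩ := meml2w_of_expDecay_comp_sub
    (ExpDecay.mono ((expDecay_deriv_solProfile hc).const_smul_left (-c)) hbk.le) (c * γ) ha hab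
  obtain ⟨hdc, hdc', hJdc⟩ := meml2w_of_expDecay_comp_sub
    (expDecay_dcProfile (kappa_pos hc).le hbk (deriv kappa c) c γ) (c * γ) ha hab
  rw [ucDc_eq hc γ]
  exact ⟨hu, hu', hdot, hdot', hdc, hdc', hJdot, hJdc⟩

end

end TodaPaper
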